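/- arXiv:2109.10054 — 3 statements merged into one kernel-verified Lean document; each statement's English description precedes it below -/
import Mathlib

section
/- Let r > 0, let θ ∈ (−π/2, π/2) (so cos θ > 0), let s > 0 and K > 0 be real numbers, and set D = K·s. Assume 2r ≠ D. Then ∫_{−K/2}^{K/2} (r·sin θ − k·s)² / (r² + (k·s)² − 2·k·s·r·sin θ) dk = K − (r·cos θ / s)·( π·𝟙[2r < D] + arctan( D·r·cos θ / (r² − D²/4) ) ). -/
open Real intervalIntegral

/-!
With `a = r cos θ` and `c = r sin θ` the denominator is `(ks - c)² + a²`, so the integrand is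
`1 - a² / ((ks - c)² + a²)`, with primitive `k - (a / s) arctan ((ks - c) / a)`. The two
arctangents at `k = ±K/2` are merged by the addition formula; the product of their arguments
exceeds `1` exactly when `2r < D`, which is where the jump by `π` comes from.
-/

theorem Real.arctan_add_arctan_of_add_pos {x y : ℝ} (hxy : 0 < x + y) (h : x * y ≠ 1) :
    arctan x + arctan y
      = π * (if 1 < x * y then (1 : ℝ) else 0) + arctan ((x + y) / (1 - x * y)) := by
  rcases h.lt_or_gt with hlt | hgt
  · rw [arctan_add hlt, if_neg hlt.not_gt, mul_zero, zero_add]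
  · have hx : 0 < x := by nlinarith
    rw [arctan_add_eq_add_pi hgt hx, if_pos hgt, mul_one, add_comm]

theorem integral_sq_div_sq_add_sq {a s : ℝ} (ha : a ≠ 0) (hs : s ≠ 0) (c u v : ℝ) :
    ∫ k in u..v, a ^ 2 / ((k * s - c) ^ 2 + a ^ 2)
      = a / s * (arctan ((v * s - c) / a) - arctan ((u * s - c) / a)) := by
  have hf : ∀ k : ℝ, a ^ 2 / ((k * s - c) ^ 2 + a ^ 2) = 1 / (1 + (s / a * k - c / a) ^ 2) := by
    intro k
    field_simp
    ring
  simp_rw [hf]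
  rw [integral_comp_mul_sub (fun t => 1 / (1 + t ^ 2)) (div_ne_zero hs ha),
    integral_one_div_one_add_sq, smul_eq_mul, inv_div]
  congr 2 <;> field_simp

theorem arctan_add_arctan_chord {a c r D : ℝ} (ha : 0 < a) (hr : 0 < r) (hD : 0 < D)
    (hr2 : a ^ 2 + c ^ 2 = r ^ 2) (hne : 2 * r ≠ D) :
    arctan ((D / 2 - c) / a) + arctan ((D / 2 + c) / a)
      = π * (if 2 * r < D then (1 : ℝ) else 0) + arctan (D * a / (r ^ 2 - D ^ 2 / 4)) := by
  have hsum : (D / 2 - c) / a + (D / 2 + c) / a = D / a := by field_simp; ring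
  have hprod : 1 - (D / 2 - c) / a * ((D / 2 + c) / a) = (r ^ 2 - D ^ 2 / 4) / a ^ 2 := by
    rw [← hr2]; field_simp; ring
  have hgt : 1 < (D / 2 - c) / a * ((D / 2 + c) / a) ↔ 2 * r < D := by
    rw [← sub_neg, hprod, div_lt_iff₀ (by positivity), zero_mul, sub_neg]
    constructor <;> intro h <;> nlinarith
  rw [arctan_add_arctan_of_add_pos (hsum ▸ div_pos hD ha) ?_, hsum, hprod]
  · simp only [hgt]
    congr 2
    field_simp
  · intro h
    rw [← sub_eq_zero, ← neg_sub, neg_eq_zero, hprod, div_eq_zero_iff, sub_eq_zero] at h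
    exact hne (by nlinarith [h.resolve_right (by positivity)])

theorem sq_sub_div_eq_one_sub_sq_div (r θ k s : ℝ) (h : r * cos θ ≠ 0) :
    (r * sin θ - k * s) ^ 2 / (r ^ 2 + (k * s) ^ 2 - 2 * k * s * r * sin θ)
      = 1 - (r * cos θ) ^ 2 / ((k * s - r * sin θ) ^ 2 + (r * cos θ) ^ 2) := by
  have hden : r ^ 2 + (k * s) ^ 2 - 2 * k * s * r * sin θ
      = (k * s - r * sin θ) ^ 2 + (r * cos θ) ^ 2 := by
    linear_combination r ^ 2 * (sin_sq_add_cos_sq θ).symm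
  have hpos : 0 < (k * s - r * sin θ) ^ 2 + (r * cos θ) ^ 2 := by positivity
  rw [hden, eq_sub_iff_add_eq, ← add_div, div_eq_one_iff_eq hpos.ne']
  ring

/-- Closed form of the near-field geometric integral (step (a)-(b) in the proof of
Corollary 1): `∫_{-K/2}^{K/2} (r sinθ - ks)²/(r² + (ks)² - 2ksr sinθ) dk
  = K - (r cosθ / s)(π·𝟙[2r<D] + arctan(D r cosθ/(r² - D²/4)))` with `D = Ks`. -/
theorem integral_sin_sq_theta_k
    (r θ s K D : ℝ) (hr : 0 < r) (hθ : θ ∈ Set.Ioo (-(Real.pi / 2)) (Real.pi / 2))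
    (hs : 0 < s) (hK : 0 < K) (hD : D = K * s) (hne : 2 * r ≠ D) :
    ∫ k in (-(K / 2))..(K / 2),
        (r * Real.sin θ - k * s) ^ 2 /
          (r ^ 2 + (k * s) ^ 2 - 2 * k * s * r * Real.sin θ)
      = K - (r * Real.cos θ / s) *
          (Real.pi * (if 2 * r < D then (1 : ℝ) else 0)
            + Real.arctan (D * r * Real.cos θ / (r ^ 2 - D ^ 2 / 4))) := by
  have ha : 0 < r * cos θ := mul_pos hr (cos_pos_of_mem_Ioo hθ)
  have hD0 : 0 < D := hD ▸ mul_pos hK hs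
  have hint : IntervalIntegrable
      (fun k => (r * cos θ) ^ 2 / ((k * s - r * sin θ) ^ 2 + (r * cos θ) ^ 2))
      MeasureTheory.volume (-(K / 2)) (K / 2) :=
    (continuous_const.div (by fun_prop) fun k => by positivity).intervalIntegrable _ _
  rw [integral_congr fun k _ => sq_sub_div_eq_one_sub_sq_div r θ k s ha.ne',
    integral_sub intervalIntegrable_const hint, integral_const,
    integral_sq_div_sq_add_sq ha.ne' hs.ne']
  have hr2 : (r * cos θ) ^ 2 + (r * sin θ) ^ 2 = r ^ 2 := by
    linear_combination r ^ 2 * cos_sq_add_sin_sq θ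
  rw [show K / 2 * s = D / 2 by rw [hD]; ring, show -(K / 2) * s = -(D / 2) by rw [hD]; ring,
    show (-(D / 2) - r * sin θ) / (r * cos θ) = -((D / 2 + r * sin θ) / (r * cos θ)) by ring,
    arctan_neg, sub_neg_eq_add, sub_neg_eq_add, arctan_add_arctan_chord ha hr hD0 hr2 hne]
  simp only [smul_eq_mul, mul_one, mul_assoc D]
  ring
end

section
/- Let D > 0 and let r be a real number with r > D/2. Then for all angles θ₁, θ₂ with 0 ≤ θ₁ ≤ θ₂ ≤ π/2, one has ξ(r, θ₁, D) ≤ ξ(r, θ₂, D); that is, for r > D/2 the geometry loss factor ξ(r, θ, D) is monotonically nondecreasing in |θ|. -/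
open Real

/-- The geometry loss factor
`ξ(r, θ, D) = 1 - (r cosθ/D)(π·𝟙[2r<D] + arctan(D r cosθ/(r² - D²/4)))`. -/
noncomputable def geomLoss (r θ D : ℝ) : ℝ :=
  1 - (r * Real.cos θ / D) *
      (Real.pi * (if 2 * r < D then (1 : ℝ) else 0)
        + Real.arctan (D * r * Real.cos θ / (r ^ 2 - D ^ 2 / 4)))

/-- For `r > D/2`, the geometry loss factor `ξ(r, θ, D)` is monotonically
nondecreasing in `θ ∈ [0, π/2]`. -/
theorem geomLoss_monotone_in_angle
    (D r : ℝ) (hD : 0 < D) (hr : D / 2 < r)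
    (θ₁ θ₂ : ℝ) (h₁ : 0 ≤ θ₁) (h₁₂ : θ₁ ≤ θ₂) (h₂ : θ₂ ≤ Real.pi / 2) :
    geomLoss r θ₁ D ≤ geomLoss r θ₂ D := by
  have hnot : ¬ (2 * r < D) := by linarith
  have hA : 0 < r ^ 2 - D ^ 2 / 4 := by nlinarith
  have hpi := Real.pi_pos
  have hc2 : 0 ≤ Real.cos θ₂ :=
    Real.cos_nonneg_of_mem_Icc ⟨by linarith, h₂⟩
  have hcle : Real.cos θ₂ ≤ Real.cos θ₁ :=
    Real.cos_le_cos_of_nonneg_of_le_pi h₁ (by linarith) h₁₂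
  have hr0 : 0 < r := by linarith
  unfold geomLoss
  rw [if_neg hnot]
  simp only [mul_zero, zero_add]
  have key : (r * Real.cos θ₂ / D) *
      Real.arctan (D * r * Real.cos θ₂ / (r ^ 2 - D ^ 2 / 4)) ≤
      (r * Real.cos θ₁ / D) *
      Real.arctan (D * r * Real.cos θ₁ / (r ^ 2 - D ^ 2 / 4)) := by
    have harctan_nonneg : 0 ≤ Real.arctan (D * r * Real.cos θ₂ / (r ^ 2 - D ^ 2 / 4)) := by
      rw [← Real.arctan_zero]
      exact Real.arctan_strictMono.monotone (by positivity)
    apply mul_le_mul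
    · gcongr
    · exact Real.arctan_strictMono.monotone (by gcongr)
    · exact harctan_nonneg
    · exact div_nonneg (mul_nonneg hr0.le (hc2.trans hcle)) hD.le
  linarith
end

section
/- Fix D > 0 and θ ∈ (−π/2, π/2). Then ξ(r, θ, D) tends to sin²θ as r → +∞; that is, the geometry loss factor converges to the far-field geometry loss sin²θ in the limit of infinite distance. -/
open Real Filter Topology

/-! For `2r ≥ D` the indicator vanishes and `ξ = 1 - a·arctan u` with `a = r cos θ / D` and
`u = D r cos θ / (r² - D²/4) → 0`, while `a·u = r² cos²θ / (r² - D²/4) → cos²θ`. Since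
`arctan u = u + o(u)`, the error `a·(arctan u - u) = o(a·u) = o(1)`, so `ξ → 1 - cos²θ = sin²θ`. -/

open Asymptotics

theorem Real.arctan_sub_self_isLittleO : (fun x : ℝ => arctan x - x) =o[𝓝 0] fun x => x := by
  simpa using hasDerivAt_iff_isLittleO.1 (hasDerivAt_arctan 0)

theorem Filter.Tendsto.mul_arctan {α : Type*} {l : Filter α} {a u : α → ℝ} {L : ℝ}
    (hu : Tendsto u l (𝓝 0)) (hau : Tendsto (fun x => a x * u x) l (𝓝 L)) :
    Tendsto (fun x => a x * arctan (u x)) l (𝓝 L) := by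
  have herr : (fun x => a x * (arctan (u x) - u x)) =o[l] fun x => a x * u x :=
    (isBigO_refl a l).mul_isLittleO (arctan_sub_self_isLittleO.comp_tendsto hu)
  have herr0 : Tendsto (fun x => a x * (arctan (u x) - u x)) l (𝓝 0) :=
    (isLittleO_one_iff ℝ).1 (herr.trans_isBigO (hau.isBigO_one ℝ))
  simpa [mul_sub] using hau.add herr0

theorem tendsto_sq_div_sq_sub_atTop (k : ℝ) :
    Tendsto (fun r : ℝ => r ^ 2 / (r ^ 2 - k)) atTop (𝓝 1) := by
  have hinv : Tendsto (fun r : ℝ => (r ^ 2)⁻¹) atTop (𝓝 0) :=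
    tendsto_inv_atTop_zero.comp (tendsto_pow_atTop two_ne_zero)
  have h := (tendsto_const_nhds.sub (hinv.const_mul k)).inv₀ (by simp : (1 : ℝ) - k * 0 ≠ 0)
  simp only [mul_zero, sub_zero, inv_one] at h
  refine h.congr' ?_
  filter_upwards [eventually_ne_atTop 0] with r hr
  field_simp

theorem tendsto_div_sq_sub_atTop (k : ℝ) :
    Tendsto (fun r : ℝ => r / (r ^ 2 - k)) atTop (𝓝 0) := by
  have h := (tendsto_sq_div_sq_sub_atTop k).mul tendsto_inv_atTop_zero
  rw [one_mul] at h
  refine h.congr' ?_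
  filter_upwards [eventually_ne_atTop 0] with r hr
  field_simp

theorem geomLoss_of_le {r θ D : ℝ} (h : D ≤ 2 * r) :
    geomLoss r θ D = 1 - r * cos θ / D * arctan (D * r * cos θ / (r ^ 2 - D ^ 2 / 4)) := by
  simp [geomLoss, not_lt.2 h]

theorem geomLoss_tendsto_farField_general
    (D θ : ℝ) (hD : 0 < D) :
    Tendsto (fun r : ℝ => geomLoss r θ D) atTop (𝓝 (Real.sin θ ^ 2)) := by
  set c := cos θ
  have hu : Tendsto (fun r => D * r * c / (r ^ 2 - D ^ 2 / 4)) atTop (𝓝 0) := by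
    simpa using ((tendsto_div_sq_sub_atTop (D ^ 2 / 4)).const_mul (D * c)).congr fun r => by ring
  have hau : Tendsto (fun r => r * c / D * (D * r * c / (r ^ 2 - D ^ 2 / 4))) atTop
      (𝓝 (c ^ 2)) := by
    convert (tendsto_sq_div_sq_sub_atTop (D ^ 2 / 4)).const_mul (c ^ 2) using 2 with r
    · field_simp
    · rw [mul_one]
  rw [sin_sq]
  refine (tendsto_const_nhds.sub (hu.mul_arctan hau)).congr' ?_
  filter_upwards [eventually_ge_atTop (D / 2)] with r hr
  rw [geomLoss_of_le (by linarith)]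

/-- In the far-field limit `r → +∞`, the geometry loss factor `ξ(r, θ, D)` tends
to the far-field geometry loss `sin²θ`. -/
theorem geomLoss_tendsto_farField
    (D θ : ℝ) (hD : 0 < D) (hθ : θ ∈ Set.Ioo (-(Real.pi / 2)) (Real.pi / 2)) :
    Tendsto (fun r : ℝ => geomLoss r θ D) atTop (𝓝 (Real.sin θ ^ 2)) :=
  geomLoss_tendsto_farField_general D θ hD
end
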